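/- arXiv:1708.00538 — 4 statements merged into one kernel-verified Lean document; each statement's English description precedes it below -/
import Mathlib

section
/- Let n ≥ 2 be an integer and R > 0. Let x ∈ ℝ^{n+1} satisfy −x₀² + Σ_{k=1}^n xₖ² = R², and let (ξ₁,…,ξ_n) ∈ ℝⁿ be nonzero with ξ₀ := √(Σ_{k=1}^n ξₖ²). Then it is impossible that x₀·ξᵢ = ξ₀·xᵢ for all i ∈ {1,…,n}; i.e., there exists i with xᵢ − x₀·ξᵢ/ξ₀ ≠ 0. (Hence the phase Φ_x(ξ) = (|x₀|+|𝐱|)^{−1}·log|(−x₀ξ₀ + Σ xᵢξᵢ)/(μR)| of a de Sitter plane wave has no stationary point in ξ.) -/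
/-- Minkowski inner product of signature (1,n) on `ℝ^{n+1}`,
with coordinates indexed `0,…,n`. -/
def mdot {n : ℕ} (x ξ : Fin (n + 1) → ℝ) : ℝ :=
  -(x 0 * ξ 0) + ∑ i : Fin n, x i.succ * ξ i.succ

/-- The phase of a de Sitter plane wave has no stationary point:
for `x` on the de Sitter hyperboloid of radius `R > 0` and a nonzero spatial
covector `(ξ₁,…,ξ_n)` with `ξ₀ := √(Σ ξₖ²)`, it is impossible that
`x₀·ξᵢ = ξ₀·xᵢ` for all `i`, i.e. there is `i` with `xᵢ − x₀ξᵢ/ξ₀ ≠ 0`. -/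
theorem no_stationary_point (n : ℕ) (hn : 2 ≤ n) (R : ℝ) (hR : 0 < R)
    (x : Fin (n + 1) → ℝ)
    (hx : -(x 0) ^ 2 + ∑ k : Fin n, (x k.succ) ^ 2 = R ^ 2)
    (ξ : Fin n → ℝ) (hξ : ξ ≠ 0) :
    (¬ ∀ i : Fin n, x 0 * ξ i = Real.sqrt (∑ k : Fin n, (ξ k) ^ 2) * x i.succ) ∧
      ∃ i : Fin n, x i.succ - x 0 * ξ i / Real.sqrt (∑ k : Fin n, (ξ k) ^ 2) ≠ 0 := by
  set S : ℝ := ∑ k : Fin n, (ξ k) ^ 2 with hS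
  have hSpos : 0 < S := by
    rcases Function.ne_iff.mp hξ with ⟨j, hj⟩
    have hj' : ξ j ≠ 0 := hj
    have : (0:ℝ) < ξ j ^ 2 := by positivity
    calc (0:ℝ) < ξ j ^ 2 := this
      _ ≤ S := Finset.single_le_sum (f := fun k => ξ k ^ 2)
          (fun k _ => sq_nonneg _) (Finset.mem_univ j)
  have hsq : Real.sqrt S > 0 := Real.sqrt_pos.mpr hSpos
  have hsqS : Real.sqrt S ^ 2 = S := Real.sq_sqrt hSpos.le
  have key : ¬ ∀ i : Fin n, x 0 * ξ i = Real.sqrt S * x i.succ := by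
    intro h
    have hsum : ∑ k : Fin n, (x 0 * ξ k) ^ 2 = ∑ k : Fin n, (Real.sqrt S * x k.succ) ^ 2 := by
      refine Finset.sum_congr rfl fun k _ => by rw [h k]
    have h1 : x 0 ^ 2 * S = S * ∑ k : Fin n, (x k.succ) ^ 2 := by
      have := hsum
      simp only [mul_pow] at this
      rw [← Finset.mul_sum, ← Finset.mul_sum] at this
      rw [this, hsqS]
    have h2 : x 0 ^ 2 = ∑ k : Fin n, (x k.succ) ^ 2 :=
      mul_right_cancel₀ (ne_of_gt hSpos) (by linarith [h1])
    rw [← h2] at hx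
    nlinarith [sq_nonneg R]
  refine ⟨key, ?_⟩
  by_contra h
  push_neg at h
  apply key
  intro i
  have hi := h i
  have : x i.succ = x 0 * ξ i / Real.sqrt S := by linarith [sub_eq_zero.mp hi]
  rw [this]
  field_simp
end

section
/- Let n ≥ 2 be an integer, μ > 0, and let ξ ∈ ℝ^{n+1} satisfy ξ·ξ = 0, ξ₀ > 0 and ξ_n = μ. For R > (n−1)/(2μ) set σ(R) := −(n−1)/2 + i·√(μ²R² − (n−1)²/4), and define ψ_R(τ,y) := exp(σ(R)·log(x(τ,y;R)·ξ/(μR))) where x(τ,y;R)·ξ > 0. Then for each fixed (τ,y) ∈ ℝ×ℝ^{n−1} and each i ∈ {1,…,n−1}, lim_{R→∞} (∂²ψ_R/∂yᵢ²)(τ,y) = −ξᵢ²·exp(i·(−τξ₀ − Σ_{j=1}^{n−1} yⱼξⱼ)). Equivalently, the square of the contracted horospheric translation generator n'ᵢ = i∂_{yᵢ} applied to the de Sitter plane wave converges in the flat limit to ξᵢ² times the limiting Minkowski plane wave. -/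
open Filter Topology

/-- The horospheric point `x(τ,y;R) ∈ ℝ^{n+1}`. -/
noncomputable def horoPt (n : ℕ) (R τ : ℝ) (y : Fin (n - 1) → ℝ) : Fin (n + 1) → ℝ :=
  fun k =>
    if _h0 : (k : ℕ) = 0 then
      R * Real.sinh (τ / R) - ((∑ i, (y i) ^ 2) / (2 * R)) * Real.exp (-τ / R)
    else if _hn : (k : ℕ) = n then
      R * Real.cosh (τ / R) - ((∑ i, (y i) ^ 2) / (2 * R)) * Real.exp (-τ / R)
    else
      -(y ⟨(k : ℕ) - 1, by have := k.isLt; omega⟩) * Real.exp (-τ / R)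

/-- The middle component `ξᵢ`, `i = 1,…,n−1`, of a covector `ξ ∈ ℝ^{n+1}`. -/
def ximid {n : ℕ} (ξ : Fin (n + 1) → ℝ) (i : Fin (n - 1)) : ℝ :=
  ξ ⟨(i : ℕ) + 1, by have := i.isLt; omega⟩

/-- The principal series exponent `σ(R) = −(n−1)/2 + i√(μ²R² − (n−1)²/4)`. -/
noncomputable def sigmaExp (n : ℕ) (μ R : ℝ) : ℂ :=
  -((n : ℂ) - 1) / 2 + Complex.I * (Real.sqrt (μ ^ 2 * R ^ 2 - ((n : ℝ) - 1) ^ 2 / 4) : ℂ)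

/-- The plane wave `ψ_R(τ,y) = (x(τ,y;R)·ξ/(μR))^{σ(R)}` in horospheric coordinates. -/
noncomputable def psiR (n : ℕ) (μ : ℝ) (ξ : Fin (n + 1) → ℝ) (R : ℝ)
    (p : ℝ × (Fin (n - 1) → ℝ)) : ℂ :=
  Complex.exp (sigmaExp n μ R * Complex.log ((mdot (horoPt n R p.1 p.2) ξ / (μ * R) : ℝ) : ℂ))

/-- Second partial derivative `∂²g/∂yᵢ²` in horospheric coordinates. -/
noncomputable def d2y {n : ℕ} (g : ℝ × (Fin (n - 1) → ℝ) → ℂ) (i : Fin (n - 1))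
    (p : ℝ × (Fin (n - 1) → ℝ)) : ℂ :=
  deriv (deriv (fun s : ℝ => g (p.1, Function.update p.2 i s))) (p.2 i)

/-!
Along the line `s ↦ y + s eᵢ` the phase `q_R(s) = x(τ, y + s eᵢ; R)·ξ / (μR)` is a quadratic
polynomial in `s`, so `∂²ψ_R/∂yᵢ² = (σ q''/q + σ(σ - 1)(q'/q)²) ψ_R`. Since `σ(R) ~ iμR`, everything
reduces to first-order asymptotics in `1/R`: on the shell `ξ_n = μ` one has
`R(q_R - 1) → (-τξ₀ - y·ξ)/μ`, `R q_R' → -ξᵢ/μ` and `R q_R'' → 0`, whence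
`σ log q_R → i(-τξ₀ - y·ξ)`, `σ q_R' → -iξᵢ` and `σ q_R'' → 0`.
-/

open Asymptotics

theorem tendsto_mul_comp_of_hasDerivAt {α : Type*} {l : Filter α} {f : ℝ → ℝ} {d c : ℝ}
    (hf : HasDerivAt f d 0) (hf0 : f 0 = 0) {r u : α → ℝ} (hu : Tendsto u l (𝓝 0))
    (hru : Tendsto (fun a => r a * u a) l (𝓝 c)) :
    Tendsto (fun a => r a * f (u a)) l (𝓝 (c * d)) := by
  have hlin : (fun a => f (u a) - u a * d) =o[l] u := by
    simpa [hf0, Function.comp_def] using hf.isLittleO.comp_tendsto hu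
  have herr : Tendsto (fun a => r a * (f (u a) - u a * d)) l (𝓝 0) :=
    (isLittleO_one_iff ℝ).mp
      (((isBigO_refl r l).mul_isLittleO hlin).trans_isBigO (hru.isBigO_one ℝ))
  simpa [mul_sub, mul_assoc] using herr.add (hru.mul_const d)

theorem tendsto_zero_of_tendsto_mul_atTop {u : ℝ → ℝ} {l : ℝ}
    (hu : Tendsto (fun R => R * u R) atTop (𝓝 l)) : Tendsto u atTop (𝓝 0) := by
  refine (zero_mul l ▸ tendsto_inv_atTop_zero.mul hu).congr' ?_
  filter_upwards [eventually_ne_atTop 0] with R hR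
  field_simp

theorem tendsto_mul_log_of_tendsto_mul_sub_one {u : ℝ → ℝ} {l : ℝ}
    (hu : Tendsto (fun R => R * (u R - 1)) atTop (𝓝 l)) :
    Tendsto (fun R => R * Real.log (u R)) atTop (𝓝 l) := by
  have hlog : HasDerivAt (fun x => Real.log (1 + x)) 1 0 := by
    simpa using ((hasDerivAt_id (0 : ℝ)).const_add 1).log (by norm_num)
  simpa using tendsto_mul_comp_of_hasDerivAt hlog (by simp)
    (tendsto_zero_of_tendsto_mul_atTop hu) hu

theorem tendsto_mul_comp_div_atTop {f : ℝ → ℝ} {d : ℝ} (hf : HasDerivAt f d 0) (hf0 : f 0 = 0)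
    (τ : ℝ) : Tendsto (fun R : ℝ => R * f (τ / R)) atTop (𝓝 (τ * d)) := by
  have hτ : Tendsto (fun R : ℝ => R * (τ / R)) atTop (𝓝 τ) :=
    tendsto_const_nhds.congr' <| by
      filter_upwards [eventually_ne_atTop 0] with R hR
      field_simp
  exact tendsto_mul_comp_of_hasDerivAt hf hf0 (tendsto_const_nhds.div_atTop tendsto_id) hτ

theorem tendsto_mul_sinh_div (τ : ℝ) :
    Tendsto (fun R : ℝ => R * Real.sinh (τ / R)) atTop (𝓝 τ) := by
  simpa using tendsto_mul_comp_div_atTop (Real.hasDerivAt_sinh 0) Real.sinh_zero τ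

theorem tendsto_mul_cosh_div_sub_one (τ : ℝ) :
    Tendsto (fun R : ℝ => R * (Real.cosh (τ / R) - 1)) atTop (𝓝 0) := by
  simpa using tendsto_mul_comp_div_atTop ((Real.hasDerivAt_cosh 0).sub_const 1) (by simp) τ

theorem tendsto_exp_div_atTop (c : ℝ) : Tendsto (fun R : ℝ => Real.exp (c / R)) atTop (𝓝 1) := by
  simpa [Function.comp_def] using
    (Real.continuous_exp.tendsto 0).comp (tendsto_const_nhds.div_atTop tendsto_id)

theorem tendsto_sqrt_sq_mul_sq_sub_div {μ : ℝ} (hμ : 0 ≤ μ) (c : ℝ) :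
    Tendsto (fun R : ℝ => Real.sqrt (μ ^ 2 * R ^ 2 - c) / R) atTop (𝓝 μ) := by
  have hlim : Tendsto (fun R : ℝ => Real.sqrt (μ ^ 2 - c / R ^ 2)) atTop (𝓝 μ) := by
    have h := ((tendsto_const_nhds (x := c)).div_atTop
      (tendsto_pow_atTop two_ne_zero)).const_sub (μ ^ 2)
    simpa [Real.sqrt_sq hμ] using h.sqrt
  refine hlim.congr' ?_
  filter_upwards [eventually_gt_atTop 0] with R hR
  rw [show μ ^ 2 - c / R ^ 2 = (μ ^ 2 * R ^ 2 - c) / R ^ 2 by field_simp,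
    Real.sqrt_div' _ (sq_nonneg R), Real.sqrt_sq hR.le]

theorem tendsto_sigmaExp_div {μ : ℝ} (hμ : 0 ≤ μ) (n : ℕ) :
    Tendsto (fun R : ℝ => sigmaExp n μ R / R) atTop (𝓝 (Complex.I * μ)) := by
  have hre : Tendsto (fun R : ℝ => (-((n : ℂ) - 1) / 2) * ((R⁻¹ : ℝ) : ℂ)) atTop (𝓝 0) := by
    simpa using (tendsto_inv_atTop_zero.ofReal).const_mul (-((n : ℂ) - 1) / 2)
  have him := ((tendsto_sqrt_sq_mul_sq_sub_div hμ (((n : ℝ) - 1) ^ 2 / 4)).ofReal).const_mul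
    Complex.I
  refine (zero_add (Complex.I * μ) ▸ hre.add him).congr fun R => ?_
  simp only [sigmaExp, Complex.ofReal_div, Complex.ofReal_inv]
  ring

theorem tendsto_sigmaExp_mul {μ : ℝ} (hμ : 0 ≤ μ) (n : ℕ) {u : ℝ → ℝ} {l : ℝ}
    (hu : Tendsto (fun R => R * u R) atTop (𝓝 l)) :
    Tendsto (fun R => sigmaExp n μ R * u R) atTop (𝓝 (Complex.I * μ * l)) := by
  refine ((tendsto_sigmaExp_div hμ n).mul hu.ofReal).congr' ?_
  filter_upwards [eventually_ne_atTop 0] with R hR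
  have hR' : (R : ℂ) ≠ 0 := Complex.ofReal_ne_zero.mpr hR
  push_cast
  field_simp

theorem hasDerivAt_cexp_mul_log {σ : ℂ} {f : ℝ → ℝ} {f' t : ℝ} (hf : HasDerivAt f f' t)
    (ht : 0 < f t) :
    HasDerivAt (fun s => Complex.exp (σ * Complex.log (f s)))
      (σ * (f' / f t) * Complex.exp (σ * Complex.log (f t))) t := by
  have hslit : ((f t : ℝ) : ℂ) ∈ Complex.slitPlane := Complex.ofReal_mem_slitPlane.mpr ht
  convert ((hf.ofReal_comp.clog_real hslit).const_mul σ).cexp using 1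
  ring

theorem deriv_deriv_cexp_mul_log {σ : ℂ} {f f' : ℝ → ℝ} {f'' s : ℝ}
    (hf : ∀ t, HasDerivAt f (f' t) t) (hf' : HasDerivAt f' f'' s) (hs : 0 < f s) :
    deriv (deriv fun t => Complex.exp (σ * Complex.log (f t))) s
      = (σ * (f'' / f s) + σ * (σ - 1) * (f' s / f s) ^ 2)
          * Complex.exp (σ * Complex.log (f s)) := by
  have hpos : ∀ᶠ t in 𝓝 s, 0 < f t :=
    (hf s).continuousAt.eventually (eventually_gt_nhds hs)
  have hderiv : deriv (fun t => Complex.exp (σ * Complex.log (f t))) =ᶠ[𝓝 s]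
      fun t => σ * (f' t / f t) * Complex.exp (σ * Complex.log (f t)) := by
    filter_upwards [hpos] with t ht
    exact (hasDerivAt_cexp_mul_log (hf t) ht).deriv
  have hfs : (f s : ℂ) ≠ 0 := Complex.ofReal_ne_zero.mpr hs.ne'
  have hquot := hf'.ofReal_comp.div (hf s).ofReal_comp hfs
  rw [hderiv.deriv_eq]
  refine ((hquot.const_mul σ).mul (hasDerivAt_cexp_mul_log (hf s) hs)).deriv.trans ?_
  simp only [Pi.div_apply]
  field_simp
  ring

theorem tendsto_second_deriv_expr {α : Type*} {l : Filter α} {σ q q' q'' E : α → ℂ} {κ L : ℂ}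
    (hq : Tendsto q l (𝓝 1)) (hq' : Tendsto q' l (𝓝 0))
    (hσq' : Tendsto (fun a => σ a * q' a) l (𝓝 κ))
    (hσq'' : Tendsto (fun a => σ a * q'' a) l (𝓝 0)) (hE : Tendsto E l (𝓝 L)) :
    Tendsto (fun a => (σ a * (q'' a / q a) + σ a * (σ a - 1) * (q' a / q a) ^ 2) * E a) l
      (𝓝 (κ ^ 2 * L)) := by
  have h := ((hσq''.div hq one_ne_zero).add
    (((hσq'.pow 2).sub (hσq'.mul hq')).div (hq.pow 2) (by norm_num))).mul hE
  simp only [zero_add, mul_zero, sub_zero, one_pow, div_one] at h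
  refine h.congr fun a => ?_
  simp only [Pi.div_apply]
  ring

theorem tendsto_deriv_deriv_cexp_sigmaExp_mul_log {n : ℕ} {μ : ℝ} (hμ : 0 < μ)
    {g g' : ℝ → ℝ → ℝ} {g'' : ℝ → ℝ} {s₀ l κ : ℝ}
    (hg : ∀ R t, HasDerivAt (g R) (g' R t) t) (hg' : ∀ R, HasDerivAt (g' R) (g'' R) s₀)
    (h0 : Tendsto (fun R => g R s₀ - μ * R) atTop (𝓝 l))
    (h1 : Tendsto (fun R => g' R s₀) atTop (𝓝 κ)) (h2 : Tendsto g'' atTop (𝓝 0)) :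
    Tendsto (fun R => deriv (deriv fun s =>
        Complex.exp (sigmaExp n μ R * Complex.log ((g R s / (μ * R) : ℝ) : ℂ))) s₀) atTop
      (𝓝 (-(κ : ℂ) ^ 2 * Complex.exp (Complex.I * l))) := by
  have hscale : ∀ {v : ℝ → ℝ} {c : ℝ}, Tendsto v atTop (𝓝 c) →
      Tendsto (fun R => R * (v R / (μ * R))) atTop (𝓝 (c / μ)) := fun hv =>
    (hv.div_const μ).congr' <| by
      filter_upwards [eventually_ne_atTop 0] with R hR
      field_simp
  have hf0 : Tendsto (fun R => R * (g R s₀ / (μ * R) - 1)) atTop (𝓝 (l / μ)) :=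
    (hscale h0).congr' <| by
      filter_upwards [eventually_ne_atTop 0] with R hR
      field_simp
  have hf1 := tendsto_sigmaExp_mul hμ.le n (hscale h1)
  have hf2 := tendsto_sigmaExp_mul hμ.le n (hscale h2)
  rw [zero_div, Complex.ofReal_zero, mul_zero] at hf2
  have hq : Tendsto (fun R => g R s₀ / (μ * R)) atTop (𝓝 1) := by
    simpa using (tendsto_zero_of_tendsto_mul_atTop hf0).add_const 1
  have hpos : ∀ᶠ R in atTop, 0 < g R s₀ / (μ * R) := hq.eventually (eventually_gt_nhds one_pos)
  have hE : Tendsto (fun R => Complex.exp (sigmaExp n μ R *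
      Complex.log ((g R s₀ / (μ * R) : ℝ) : ℂ))) atTop
      (𝓝 (Complex.exp (Complex.I * μ * (l / μ : ℝ)))) := by
    refine (Complex.continuous_exp.tendsto _).comp <|
      (tendsto_sigmaExp_mul hμ.le n (tendsto_mul_log_of_tendsto_mul_sub_one hf0)).congr' ?_
    filter_upwards [hpos] with R hR
    rw [Complex.ofReal_log hR.le]
  have hlim := tendsto_second_deriv_expr hq.ofReal
    (tendsto_zero_of_tendsto_mul_atTop (hscale h1)).ofReal hf1 hf2 hE
  have hμ' : (μ : ℂ) ≠ 0 := Complex.ofReal_ne_zero.mpr hμ.ne'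
  convert hlim.congr' _ using 2
  · push_cast
    field_simp
    rw [Complex.I_sq]
    ring
  · filter_upwards [hpos] with R hR
    exact (deriv_deriv_cexp_mul_log (fun t => (hg R t).div_const _) ((hg' R).div_const _) hR).symm

theorem Finset.sum_comp_update {ι α M : Type*} [Fintype ι] [DecidableEq ι] [AddCommGroup M]
    (g : ι → α → M) (y : ι → α) (i : ι) (s : α) :
    ∑ j, g j (Function.update y i s j) = ∑ j, g j (y j) + (g i s - g i (y i)) := by
  rw [← Finset.add_sum_erase _ _ (Finset.mem_univ i),
    ← Finset.add_sum_erase _ (fun j => g j (y j)) (Finset.mem_univ i),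
    Finset.sum_congr rfl fun j hj => by rw [Function.update_of_ne (Finset.ne_of_mem_erase hj)]]
  simp only [Function.update_self]
  abel

theorem mdot_horoPt {n : ℕ} (hn : n ≠ 0) (R τ : ℝ) (y : Fin (n - 1) → ℝ)
    (ξ : Fin (n + 1) → ℝ) :
    mdot (horoPt n R τ y) ξ
      = ξ (Fin.last n) * (R * Real.cosh (τ / R)) - ξ 0 * (R * Real.sinh (τ / R))
        - Real.exp (-τ / R) * ((∑ j, y j ^ 2) / (2 * R) * (ξ (Fin.last n) - ξ 0)
          + ∑ j, y j * ximid ξ j) := by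
  obtain ⟨m, rfl⟩ := Nat.exists_eq_succ_of_ne_zero hn
  have hzero : horoPt (m + 1) R τ y 0
      = R * Real.sinh (τ / R) - (∑ j, y j ^ 2) / (2 * R) * Real.exp (-τ / R) := by
    simp [horoPt]
  have hmid : ∀ j : Fin m, horoPt (m + 1) R τ y j.castSucc.succ = -y j * Real.exp (-τ / R) :=
    fun j => by simp [horoPt, j.isLt.ne]
  have hlast : horoPt (m + 1) R τ y (Fin.last (m + 1))
      = R * Real.cosh (τ / R) - (∑ j, y j ^ 2) / (2 * R) * Real.exp (-τ / R) := by
    simp [horoPt]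
  have hsum : ∑ j : Fin m, -y j * Real.exp (-τ / R) * ξ j.castSucc.succ
      = -Real.exp (-τ / R) * ∑ j, y j * ximid ξ j := by
    rw [Finset.mul_sum]
    exact Finset.sum_congr rfl fun j _ => by
      rw [show ximid ξ j = ξ j.castSucc.succ from rfl]
      ring
  rw [mdot, Fin.sum_univ_castSucc, Fin.succ_last, hlast, hzero]
  simp only [hmid]
  rw [hsum]
  ring

theorem hasDerivAt_mdot_horoPt_update {n : ℕ} (hn : n ≠ 0) (R τ : ℝ) (y : Fin (n - 1) → ℝ)
    (ξ : Fin (n + 1) → ℝ) (i : Fin (n - 1)) (s : ℝ) :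
    HasDerivAt (fun s => mdot (horoPt n R τ (Function.update y i s)) ξ)
      (-Real.exp (-τ / R) * (ximid ξ i + s * (ξ (Fin.last n) - ξ 0) / R)) s := by
  have hform : (fun s => mdot (horoPt n R τ (Function.update y i s)) ξ)
      = fun s => mdot (horoPt n R τ y) ξ - Real.exp (-τ / R) *
          ((s ^ 2 - y i ^ 2) / (2 * R) * (ξ (Fin.last n) - ξ 0) + (s - y i) * ximid ξ i) := by
    funext s
    rw [mdot_horoPt hn, mdot_horoPt hn, Finset.sum_comp_update (fun _ a => a ^ 2),
      Finset.sum_comp_update (fun j a => a * ximid ξ j)]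
    ring
  have hquad : HasDerivAt (fun s => (s ^ 2 - y i ^ 2) / (2 * R) * (ξ (Fin.last n) - ξ 0)
      + (s - y i) * ximid ξ i) (2 * s / (2 * R) * (ξ (Fin.last n) - ξ 0) + ximid ξ i) s := by
    refine (((((hasDerivAt_pow 2 s).sub_const (y i ^ 2)).div_const (2 * R)).mul_const
      (ξ (Fin.last n) - ξ 0)).add
        (((hasDerivAt_id s).sub_const (y i)).mul_const (ximid ξ i))).congr_deriv ?_
    simp
  rw [hform]
  exact ((hquad.const_mul (Real.exp (-τ / R))).const_sub (mdot (horoPt n R τ y) ξ)).congr_deriv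
    (by ring)

theorem tendsto_mdot_horoPt_sub_mul {n : ℕ} (hn : n ≠ 0) (τ : ℝ) (y : Fin (n - 1) → ℝ)
    (ξ : Fin (n + 1) → ℝ) :
    Tendsto (fun R => mdot (horoPt n R τ y) ξ - ξ (Fin.last n) * R) atTop
      (𝓝 (-(τ * ξ 0) - ∑ j, y j * ximid ξ j)) := by
  have hquad : Tendsto (fun R => (∑ j, y j ^ 2) / (2 * R) * (ξ (Fin.last n) - ξ 0)
      + ∑ j, y j * ximid ξ j) atTop (𝓝 (∑ j, y j * ximid ξ j)) := by
    simpa using ((tendsto_const_nhds.div_atTop (tendsto_id.const_mul_atTop two_pos)).mul_const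
      (ξ (Fin.last n) - ξ 0)).add_const (∑ j, y j * ximid ξ j)
  have h := (((tendsto_mul_cosh_div_sub_one τ).const_mul (ξ (Fin.last n))).sub
    ((tendsto_mul_sinh_div τ).const_mul (ξ 0))).sub ((tendsto_exp_div_atTop (-τ)).mul hquad)
  rw [show ξ (Fin.last n) * 0 - ξ 0 * τ - 1 * ∑ j, y j * ximid ξ j
    = -(τ * ξ 0) - ∑ j, y j * ximid ξ j by ring] at h
  refine h.congr fun R => ?_
  rw [mdot_horoPt hn]
  ring

theorem flat_limit_translation_squared_general (n : ℕ) (μ : ℝ) (hμ : 0 < μ)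
    (ξ : Fin (n + 1) → ℝ)
    (hshell : ξ ⟨n, Nat.lt_succ_self n⟩ = μ)
    (τ : ℝ) (y : Fin (n - 1) → ℝ) (i : Fin (n - 1)) :
    Tendsto (fun R : ℝ => d2y (psiR n μ ξ R) i (τ, y)) atTop
      (𝓝 (-((ximid ξ i : ℂ)) ^ 2 *
        Complex.exp (Complex.I *
          ((-(τ * ξ 0) - ∑ j : Fin (n - 1), y j * ximid ξ j : ℝ) : ℂ)))) := by
  have hn : n ≠ 0 := by have := i.isLt; omega
  have hphase := tendsto_mdot_horoPt_sub_mul hn τ y ξ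
  have hslope : Tendsto
      (fun R => -Real.exp (-τ / R) * (ximid ξ i + y i * (ξ (Fin.last n) - ξ 0) / R)) atTop
      (𝓝 (-ximid ξ i)) := by
    simpa using (tendsto_exp_div_atTop (-τ)).neg.mul
      ((tendsto_const_nhds.div_atTop tendsto_id).const_add (ximid ξ i))
  have hcurv :
      Tendsto (fun R => -Real.exp (-τ / R) * ((ξ (Fin.last n) - ξ 0) / R)) atTop (𝓝 0) := by
    simpa using (tendsto_exp_div_atTop (-τ)).neg.mul (tendsto_const_nhds.div_atTop tendsto_id)
  rw [show ξ (Fin.last n) = μ from hshell] at hphase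
  have h := tendsto_deriv_deriv_cexp_sigmaExp_mul_log (n := n) hμ
    (g := fun R s => mdot (horoPt n R τ (Function.update y i s)) ξ)
    (fun R => hasDerivAt_mdot_horoPt_update hn R τ y ξ i)
    (fun R => (((hasDerivAt_mul_const _).div_const R).const_add _).const_mul _)
    (by simpa only [Function.update_eq_self, mul_comm] using hphase) hslope hcurv
  rw [show -((ximid ξ i : ℂ)) ^ 2 = -((-ximid ξ i : ℝ) : ℂ) ^ 2 by push_cast; ring]
  exact h

/-- On the mass shell `ξ_n = μ`, the square of the contracted horospheric translation
generator applied to the de Sitter plane wave converges in the flat limit: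
`∂²ψ_R/∂yᵢ² → −ξᵢ²·e^{i(−τξ₀ − Σⱼ yⱼξⱼ)}` pointwise as `R → ∞`. -/
theorem flat_limit_translation_squared (n : ℕ) (hn : 2 ≤ n) (μ : ℝ) (hμ : 0 < μ)
    (ξ : Fin (n + 1) → ℝ) (hnull : mdot ξ ξ = 0) (hpos : 0 < ξ 0)
    (hshell : ξ ⟨n, Nat.lt_succ_self n⟩ = μ)
    (τ : ℝ) (y : Fin (n - 1) → ℝ) (i : Fin (n - 1)) :
    Tendsto (fun R : ℝ => d2y (psiR n μ ξ R) i (τ, y)) atTop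
      (𝓝 (-((ximid ξ i : ℂ)) ^ 2 *
        Complex.exp (Complex.I *
          ((-(τ * ξ 0) - ∑ j : Fin (n - 1), y j * ximid ξ j : ℝ) : ℂ)))) :=
  flat_limit_translation_squared_general n μ hμ ξ hshell τ y i
end

section
/- Let n ≥ 2 be an integer, σ ∈ ℂ, and let ξ ∈ ℝ^{n+1} be a null covector (ξ·ξ = 0). For smooth complex-valued functions g on ℝ^{n+1} define the first-order operators X_{i0}g := x_i·∂g/∂x₀ + x₀·∂g/∂x_i (1 ≤ i ≤ n) and X_{ij}g := x_i·∂g/∂x_j − x_j·∂g/∂x_i (1 ≤ i < j ≤ n). Then on the open set U = {x ∈ ℝ^{n+1} : x·ξ > 0}, the function ψ(x) := exp(σ·log(x·ξ)) satisfies Σ_{1≤i<j≤n} X_{ij}²ψ − Σ_{i=1}^n X_{i0}²ψ = −σ(σ + n − 1)·ψ. In particular, with m_{i0} = iX_{i0} and m_{ij} = iX_{ij} the representations of the Lorentz generators, the de Sitter d'Alembertian □_{dS} = (1/R²)(𝐦² − 𝐣²) satisfies □_{dS}ψ = μ²ψ where μ²R² = −σ(n−1+σ). -/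
/-- Partial derivative `∂g/∂xₐ` of `g : ℝ^{n+1} → ℂ` at `x`. -/
noncomputable def pd {n : ℕ} (a : Fin (n + 1)) (g : (Fin (n + 1) → ℝ) → ℂ)
    (x : Fin (n + 1) → ℝ) : ℂ :=
  deriv (fun s : ℝ => g (Function.update x a s)) (x a)

/-- The boost generator `X_{i0}g = xᵢ·∂g/∂x₀ + x₀·∂g/∂xᵢ`, `1 ≤ i ≤ n`. -/
noncomputable def Xb {n : ℕ} (i : Fin n) (g : (Fin (n + 1) → ℝ) → ℂ)
    (x : Fin (n + 1) → ℝ) : ℂ :=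
  (x i.succ : ℂ) * pd 0 g x + (x 0 : ℂ) * pd i.succ g x

/-- The rotation generator `X_{ij}g = xᵢ·∂g/∂xⱼ − xⱼ·∂g/∂xᵢ`, `1 ≤ i,j ≤ n`. -/
noncomputable def Xr {n : ℕ} (i j : Fin n) (g : (Fin (n + 1) → ℝ) → ℂ)
    (x : Fin (n + 1) → ℝ) : ℂ :=
  (x i.succ : ℂ) * pd j.succ g x - (x j.succ : ℂ) * pd i.succ g x

open Complex Filter Topology

section LinearFunctionals

variable {ι : Type*} [DecidableEq ι]

lemma update_eq_add_smul_single {R : Type*} [Ring R] (x : ι → R) (a : ι) (s : R) :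
    Function.update x a s = x + (s - x a) • Pi.single a 1 := by
  ext b
  by_cases hb : b = a
  · subst hb; simp
  · simp [hb]

lemma LinearMap.apply_update (ℓ : (ι → ℝ) →ₗ[ℝ] ℝ) (x : ι → ℝ) (a : ι) (s : ℝ) :
    ℓ (Function.update x a s) = ℓ x + (s - x a) * ℓ (Pi.single a 1) := by
  rw [update_eq_add_smul_single, map_add, map_smul, smul_eq_mul]

lemma LinearMap.apply_eq_sum_mul_single [Fintype ι] (ℓ : (ι → ℝ) →ₗ[ℝ] ℝ) (v : ι → ℝ) :
    ℓ v = ∑ a, v a * ℓ (Pi.single a 1) := by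
  rw [LinearMap.pi_apply_eq_sum_univ ℓ v]
  refine Finset.sum_congr rfl fun a _ => ?_
  congr 2
  ext b
  simp [Pi.single_apply, eq_comm]

lemma LinearMap.hasDerivAt_apply_update (ℓ : (ι → ℝ) →ₗ[ℝ] ℝ) (x : ι → ℝ) (a : ι) :
    HasDerivAt (fun s => ℓ (Function.update x a s)) (ℓ (Pi.single a 1)) (x a) := by
  simp only [ℓ.apply_update]
  simpa using
    (((hasDerivAt_id (x a)).sub_const (x a)).mul_const (ℓ (Pi.single a 1))).const_add (ℓ x)

end LinearFunctionals

section PartialDerivatives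

variable {n : ℕ}

lemma pd_comp_linear {ℓ : (Fin (n + 1) → ℝ) →ₗ[ℝ] ℝ} {h : ℝ → ℂ} {d : ℂ}
    {x : Fin (n + 1) → ℝ} (hh : HasDerivAt h d (ℓ x)) (a : Fin (n + 1)) :
    pd a (fun z => h (ℓ z)) x = ℓ (Pi.single a 1) * d := by
  rw [← Function.update_eq_self a x] at hh
  exact (hh.scomp (x a) (ℓ.hasDerivAt_apply_update x a)).deriv.trans (real_smul ..)

lemma pd_mul_comp_linear {ℓ μ : (Fin (n + 1) → ℝ) →ₗ[ℝ] ℝ} {k : ℝ → ℂ} {d : ℂ}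
    {x : Fin (n + 1) → ℝ} (hk : HasDerivAt k d (ℓ x)) (a : Fin (n + 1)) :
    pd a (fun z => (μ z : ℂ) * k (ℓ z)) x
      = μ (Pi.single a 1) * k (ℓ x) + μ x * (ℓ (Pi.single a 1) * d) := by
  rw [← Function.update_eq_self a x] at hk
  have hμ := (μ.hasDerivAt_apply_update x a).ofReal_comp
  refine (hμ.mul (hk.scomp (x a) (ℓ.hasDerivAt_apply_update x a))).deriv.trans ?_
  simp only [Function.update_eq_self, Function.comp_apply, real_smul]

lemma pd_congr_of_eventuallyEq {g g' : (Fin (n + 1) → ℝ) → ℂ} {x : Fin (n + 1) → ℝ}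
    (hg : g =ᶠ[𝓝 x] g') (a : Fin (n + 1)) : pd a g x = pd a g' x := by
  have hline : Tendsto (Function.update x a) (𝓝 (x a)) (𝓝 x) := by
    simpa using ((continuous_const (y := x)).update a continuous_id).tendsto (x a)
  exact EventuallyEq.deriv_eq (hline.eventually hg)

end PartialDerivatives

section VectorFields

variable {n : ℕ}

noncomputable def fieldDeriv (A : (Fin (n + 1) → ℝ) →ₗ[ℝ] Fin (n + 1) → ℝ)
    (g : (Fin (n + 1) → ℝ) → ℂ) (x : Fin (n + 1) → ℝ) : ℂ :=
  ∑ a, (A x a : ℂ) * pd a g x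

lemma fieldDeriv_congr_of_eventuallyEq (A : (Fin (n + 1) → ℝ) →ₗ[ℝ] Fin (n + 1) → ℝ)
    {g g' : (Fin (n + 1) → ℝ) → ℂ} {x : Fin (n + 1) → ℝ} (hg : g =ᶠ[𝓝 x] g') :
    fieldDeriv A g x = fieldDeriv A g' x := by
  simp only [fieldDeriv, pd_congr_of_eventuallyEq hg]

lemma fieldDeriv_comp_linear (A : (Fin (n + 1) → ℝ) →ₗ[ℝ] Fin (n + 1) → ℝ)
    {ℓ : (Fin (n + 1) → ℝ) →ₗ[ℝ] ℝ} {h : ℝ → ℂ} {d : ℂ} {x : Fin (n + 1) → ℝ}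
    (hh : HasDerivAt h d (ℓ x)) :
    fieldDeriv A (fun z => h (ℓ z)) x = ℓ (A x) * d := by
  simp only [fieldDeriv, pd_comp_linear hh, ℓ.apply_eq_sum_mul_single (A x)]
  push_cast
  rw [Finset.sum_mul]
  exact Finset.sum_congr rfl fun a _ => by ring

lemma fieldDeriv_mul_comp_linear (A : (Fin (n + 1) → ℝ) →ₗ[ℝ] Fin (n + 1) → ℝ)
    {ℓ μ : (Fin (n + 1) → ℝ) →ₗ[ℝ] ℝ} {k : ℝ → ℂ} {d : ℂ} {x : Fin (n + 1) → ℝ}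
    (hk : HasDerivAt k d (ℓ x)) :
    fieldDeriv A (fun z => (μ z : ℂ) * k (ℓ z)) x = μ (A x) * k (ℓ x) + μ x * ℓ (A x) * d := by
  simp only [fieldDeriv, pd_mul_comp_linear hk, ℓ.apply_eq_sum_mul_single (A x),
    μ.apply_eq_sum_mul_single (A x)]
  push_cast
  rw [Finset.sum_mul, Finset.mul_sum, Finset.sum_mul, ← Finset.sum_add_distrib]
  exact Finset.sum_congr rfl fun a _ => by ring

lemma fieldDeriv_fieldDeriv_comp_linear (A : (Fin (n + 1) → ℝ) →ₗ[ℝ] Fin (n + 1) → ℝ)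
    {ℓ : (Fin (n + 1) → ℝ) →ₗ[ℝ] ℝ} {h h' : ℝ → ℂ} {h'' : ℂ} {x : Fin (n + 1) → ℝ}
    (hh : ∀ᶠ t in 𝓝 (ℓ x), HasDerivAt h (h' t) t) (hh' : HasDerivAt h' h'' (ℓ x)) :
    fieldDeriv A (fieldDeriv A fun z => h (ℓ z)) x
      = ℓ (A (A x)) * h' (ℓ x) + (ℓ (A x) ^ 2 : ℝ) * h'' := by
  have hfirst : (fieldDeriv A fun z => h (ℓ z)) =ᶠ[𝓝 x] fun z => ((ℓ ∘ₗ A) z : ℂ) * h' (ℓ z) := by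
    have hℓ := (LinearMap.continuous_of_finiteDimensional ℓ).tendsto x
    filter_upwards [hℓ.eventually hh] with z hz
    exact fieldDeriv_comp_linear A hz
  rw [fieldDeriv_congr_of_eventuallyEq A hfirst, fieldDeriv_mul_comp_linear A hh']
  simp only [LinearMap.comp_apply, ofReal_pow]
  ring

end VectorFields

section LorentzGenerators

variable {n : ℕ}

/-- The vector field `x_p ∂_q`. -/
def coordField (p q : Fin (n + 1)) : (Fin (n + 1) → ℝ) →ₗ[ℝ] Fin (n + 1) → ℝ :=
  (LinearMap.proj p).smulRight (Pi.single q 1)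

def boostField (i : Fin n) : (Fin (n + 1) → ℝ) →ₗ[ℝ] Fin (n + 1) → ℝ :=
  coordField i.succ 0 + coordField 0 i.succ

def rotationField (i j : Fin n) : (Fin (n + 1) → ℝ) →ₗ[ℝ] Fin (n + 1) → ℝ :=
  coordField i.succ j.succ - coordField j.succ i.succ

lemma fieldDeriv_coordField (p q : Fin (n + 1)) (g : (Fin (n + 1) → ℝ) → ℂ)
    (x : Fin (n + 1) → ℝ) : fieldDeriv (coordField p q) g x = x p * pd q g x := by
  simp [fieldDeriv, coordField, Pi.single_apply, apply_ite (fun r : ℝ => (r : ℂ))]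

lemma fieldDeriv_add (A B : (Fin (n + 1) → ℝ) →ₗ[ℝ] Fin (n + 1) → ℝ)
    (g : (Fin (n + 1) → ℝ) → ℂ) (x : Fin (n + 1) → ℝ) :
    fieldDeriv (A + B) g x = fieldDeriv A g x + fieldDeriv B g x := by
  simp only [fieldDeriv, LinearMap.add_apply, Pi.add_apply, ofReal_add, add_mul,
    Finset.sum_add_distrib]

lemma fieldDeriv_sub (A B : (Fin (n + 1) → ℝ) →ₗ[ℝ] Fin (n + 1) → ℝ)
    (g : (Fin (n + 1) → ℝ) → ℂ) (x : Fin (n + 1) → ℝ) :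
    fieldDeriv (A - B) g x = fieldDeriv A g x - fieldDeriv B g x := by
  simp only [fieldDeriv, LinearMap.sub_apply, Pi.sub_apply, ofReal_sub, sub_mul,
    Finset.sum_sub_distrib]

lemma Xb_eq_fieldDeriv (i : Fin n) : Xb i = fieldDeriv (boostField i) := by
  ext g x
  rw [Xb, boostField, fieldDeriv_add, fieldDeriv_coordField, fieldDeriv_coordField]

lemma Xr_eq_fieldDeriv (i j : Fin n) : Xr i j = fieldDeriv (rotationField i j) := by
  ext g x
  rw [Xr, rotationField, fieldDeriv_sub, fieldDeriv_coordField, fieldDeriv_coordField]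

/-- For `f A = A²` this is the Casimir element of `𝔰𝔬(1, n)`. -/
def casimirSum {M : Type*} [AddCommGroup M]
    (f : ((Fin (n + 1) → ℝ) →ₗ[ℝ] Fin (n + 1) → ℝ) → M) : M :=
  (∑ i : Fin n, ∑ j : Fin n, if i < j then f (rotationField i j) else 0)
    - ∑ i : Fin n, f (boostField i)

lemma casimirSum_ofReal_mul_add (f g : ((Fin (n + 1) → ℝ) →ₗ[ℝ] Fin (n + 1) → ℝ) → ℝ)
    (c d : ℂ) :
    casimirSum (fun A => (f A : ℂ) * c + (g A : ℂ) * d)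
      = ((casimirSum f : ℝ) : ℂ) * c + ((casimirSum g : ℝ) : ℂ) * d := by
  simp only [casimirSum, ofReal_sub, ofReal_sum, apply_ite (fun r : ℝ => (r : ℂ)), ofReal_zero]
  simp only [Finset.sum_mul, sub_mul, ite_mul, zero_mul]
  rw [sub_add_sub_comm, ← Finset.sum_add_distrib, ← Finset.sum_add_distrib]
  congr 1
  refine Finset.sum_congr rfl fun i _ => ?_
  rw [← Finset.sum_add_distrib]
  refine Finset.sum_congr rfl fun j _ => ?_
  split_ifs <;> simp

end LorentzGenerators

section PairSums

variable {ι : Type*} [Fintype ι] [LinearOrder ι]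

lemma two_mul_sum_sum_ite_lt {F : ι → ι → ℝ} (hF : ∀ i j, F i j = F j i) :
    2 * ∑ i, ∑ j, (if i < j then F i j else 0) = ∑ i, ∑ j, F i j - ∑ i, F i i := by
  have hswap : ∑ i, ∑ j, (if i < j then F i j else 0) = ∑ i, ∑ j, if j < i then F i j else 0 := by
    rw [Finset.sum_comm]
    simp only [hF]
  have hsplit : ∀ i j, F i j = (if i < j then F i j else 0) + (if j < i then F i j else 0)
      + if i = j then F i j else 0 := by
    intro i j
    rcases lt_trichotomy i j with h | rfl | h
    · simp [h, h.not_gt, h.ne]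
    · simp
    · simp [h, h.not_gt, h.ne']
  rw [Finset.sum_congr rfl fun i _ => Finset.sum_congr rfl fun j _ => hsplit i j]
  simp only [Finset.sum_add_distrib, Finset.sum_ite_eq, Finset.mem_univ, if_true, ← hswap]
  ring

lemma sum_sum_ite_lt_add (u : ι → ℝ) :
    ∑ i, ∑ j, (if i < j then u i + u j else 0) = (Fintype.card ι - 1) * ∑ i, u i := by
  have h := two_mul_sum_sum_ite_lt (F := fun i j => u i + u j) fun i j => add_comm _ _
  simp only [Finset.sum_add_distrib, Finset.sum_const, Finset.card_univ, nsmul_eq_mul] at h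
  rw [← Finset.mul_sum] at h
  linarith

/-- Lagrange's identity. -/
lemma sum_sum_ite_lt_sq (u v : ι → ℝ) :
    ∑ i, ∑ j, (if i < j then (u i * v j - u j * v i) ^ 2 else 0)
      = (∑ i, u i ^ 2) * (∑ i, v i ^ 2) - (∑ i, u i * v i) ^ 2 := by
  have h := two_mul_sum_sum_ite_lt (F := fun i j => (u i * v j - u j * v i) ^ 2)
    fun i j => by ring
  have hfull : ∑ i, ∑ j, (u i * v j - u j * v i) ^ 2
      = 2 * ((∑ i, u i ^ 2) * (∑ i, v i ^ 2) - (∑ i, u i * v i) ^ 2) := by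
    have hexpand : ∀ i j, (u i * v j - u j * v i) ^ 2
        = u i ^ 2 * v j ^ 2 + u j ^ 2 * v i ^ 2 - 2 * (u i * v i) * (u j * v j) :=
      fun i j => by ring
    simp only [hexpand, Finset.sum_add_distrib, Finset.sum_sub_distrib, ← Finset.mul_sum,
      ← Finset.sum_mul]
    ring
  simp only [hfull, sub_self, zero_pow two_ne_zero, Finset.sum_const_zero, sub_zero] at h
  linarith

end PairSums

section Minkowski

variable {n : ℕ}

def mdotLeft (ξ : Fin (n + 1) → ℝ) : (Fin (n + 1) → ℝ) →ₗ[ℝ] ℝ where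
  toFun x := mdot x ξ
  map_add' x y := by simp only [mdot, Pi.add_apply, add_mul, Finset.sum_add_distrib]; ring
  map_smul' c x := by
    simp only [mdot, Pi.smul_apply, smul_eq_mul, RingHom.id_apply, mul_add, Finset.mul_sum,
      mul_assoc, mul_neg]

lemma mdotLeft_apply (ξ x : Fin (n + 1) → ℝ) : mdotLeft ξ x = mdot x ξ := rfl

lemma mdotLeft_single_zero (ξ : Fin (n + 1) → ℝ) : mdotLeft ξ (Pi.single 0 1) = -ξ 0 := by
  simp [mdotLeft_apply, mdot, Fin.succ_ne_zero]

lemma mdotLeft_single_succ (ξ : Fin (n + 1) → ℝ) (i : Fin n) :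
    mdotLeft ξ (Pi.single i.succ 1) = ξ i.succ := by
  simp [mdotLeft_apply, mdot, Pi.single_apply, (Fin.succ_ne_zero i).symm]

lemma boostField_apply (i : Fin n) (x : Fin (n + 1) → ℝ) :
    boostField i x = x i.succ • Pi.single 0 1 + x 0 • Pi.single i.succ 1 := rfl

lemma rotationField_apply (i j : Fin n) (x : Fin (n + 1) → ℝ) :
    rotationField i j x = x i.succ • Pi.single j.succ 1 - x j.succ • Pi.single i.succ 1 := rfl

lemma mdot_boostField (ξ x : Fin (n + 1) → ℝ) (i : Fin n) :
    mdot (boostField i x) ξ = x 0 * ξ i.succ - x i.succ * ξ 0 := by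
  rw [← mdotLeft_apply, boostField_apply, map_add, map_smul, map_smul, mdotLeft_single_zero,
    mdotLeft_single_succ, smul_eq_mul, smul_eq_mul]
  ring

lemma mdot_rotationField (ξ x : Fin (n + 1) → ℝ) (i j : Fin n) :
    mdot (rotationField i j x) ξ = x i.succ * ξ j.succ - x j.succ * ξ i.succ := by
  rw [← mdotLeft_apply, rotationField_apply, map_sub, map_smul, map_smul, mdotLeft_single_succ,
    mdotLeft_single_succ, smul_eq_mul, smul_eq_mul]

lemma mdot_boostField_boostField (ξ x : Fin (n + 1) → ℝ) (i : Fin n) :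
    mdot (boostField i (boostField i x)) ξ = x i.succ * ξ i.succ - x 0 * ξ 0 := by
  rw [mdot_boostField]
  simp [boostField_apply, (Fin.succ_ne_zero i).symm]

lemma mdot_rotationField_rotationField (ξ x : Fin (n + 1) → ℝ) {i j : Fin n} (hij : i ≠ j) :
    mdot (rotationField i j (rotationField i j x)) ξ
      = -(x j.succ * ξ j.succ) - x i.succ * ξ i.succ := by
  rw [mdot_rotationField]
  simp [rotationField_apply, hij, hij.symm]

end Minkowski

section Casimir

variable {n : ℕ}

lemma casimirSum_mdot_apply_apply (ξ x : Fin (n + 1) → ℝ) :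
    casimirSum (fun A => mdot (A (A x)) ξ) = -n * mdot x ξ := by
  have hrot : ∀ i j : Fin n, (if i < j then mdot (rotationField i j (rotationField i j x)) ξ else 0)
      = -(if i < j then x i.succ * ξ i.succ + x j.succ * ξ j.succ else 0) := by
    intro i j
    split_ifs with h
    · rw [mdot_rotationField_rotationField ξ x h.ne]
      ring
    · simp
  simp only [casimirSum, hrot, mdot_boostField_boostField, Finset.sum_neg_distrib,
    sum_sum_ite_lt_add (fun i : Fin n => x i.succ * ξ i.succ), Finset.sum_sub_distrib,
    Finset.sum_const, Finset.card_univ, Fintype.card_fin, nsmul_eq_mul]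
  unfold mdot
  ring

lemma casimirSum_mdot_apply_sq (ξ x : Fin (n + 1) → ℝ) :
    casimirSum (fun A => mdot (A x) ξ ^ 2) = mdot x x * mdot ξ ξ - mdot x ξ ^ 2 := by
  have hrot := sum_sum_ite_lt_sq (fun i : Fin n => x i.succ) (fun i => ξ i.succ)
  have hboost : ∑ i : Fin n, (x 0 * ξ i.succ - x i.succ * ξ 0) ^ 2
      = x 0 ^ 2 * ∑ i : Fin n, ξ i.succ ^ 2 - 2 * (x 0 * ξ 0) * ∑ i : Fin n, x i.succ * ξ i.succ
        + ξ 0 ^ 2 * ∑ i : Fin n, x i.succ ^ 2 := by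
    rw [Finset.mul_sum, Finset.mul_sum, Finset.mul_sum, ← Finset.sum_sub_distrib,
      ← Finset.sum_add_distrib]
    exact Finset.sum_congr rfl fun i _ => by ring
  simp only [casimirSum, mdot_rotationField, mdot_boostField, hrot, hboost]
  unfold mdot
  simp only [← sq]
  ring

end Casimir

lemma cexp_sub_natCast_mul_log_mul_pow (σ : ℂ) {t : ℝ} (ht : 0 < t) (k : ℕ) :
    exp ((σ - k) * log t) * (t : ℂ) ^ k = exp (σ * log t) := by
  have hpow : (t : ℂ) ^ k = exp (k * log t) := by
    rw [exp_nat_mul, exp_log (ofReal_ne_zero.mpr ht.ne')]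
  rw [hpow, ← exp_add]
  ring_nf

lemma hasDerivAt_cexp_mul_log_s12 (σ : ℂ) {t : ℝ} (ht : 0 < t) :
    HasDerivAt (fun t : ℝ => exp (σ * log t)) (σ * exp ((σ - 1) * log t)) t := by
  have hlog := (hasDerivAt_id' t).ofReal_comp.clog_real (by simpa using ht)
  refine (hlog.const_mul σ).cexp.congr_deriv ?_
  have hexp := cexp_sub_natCast_mul_log_mul_pow σ ht 1
  rw [Nat.cast_one, pow_one] at hexp
  rw [← hexp, ofReal_one]
  field_simp [ofReal_ne_zero.mpr ht.ne']

theorem plane_wave_casimir_general (n : ℕ) (σ : ℂ)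
    (ξ : Fin (n + 1) → ℝ) (hnull : mdot ξ ξ = 0) :
    ∀ x : Fin (n + 1) → ℝ, 0 < mdot x ξ →
      (∑ i : Fin n, ∑ j : Fin n, if i < j then
          Xr i j (Xr i j (fun z => Complex.exp (σ * Complex.log ((mdot z ξ : ℝ) : ℂ)))) x
        else 0) -
        ∑ i : Fin n,
          Xb i (Xb i (fun z => Complex.exp (σ * Complex.log ((mdot z ξ : ℝ) : ℂ)))) x =
      -σ * (σ + (n : ℂ) - 1) * Complex.exp (σ * Complex.log ((mdot x ξ : ℝ) : ℂ)) := by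
  intro x hx
  have hsecond : ∀ A, fieldDeriv A (fieldDeriv A fun z => exp (σ * log (mdot z ξ))) x
      = mdot (A (A x)) ξ * (σ * exp ((σ - 1) * log (mdot x ξ)))
        + (mdot (A x) ξ ^ 2 : ℝ) * (σ * ((σ - 1) * exp ((σ - 1 - 1) * log (mdot x ξ)))) :=
    fun A => fieldDeriv_fieldDeriv_comp_linear A (ℓ := mdotLeft ξ)
      (h := fun t : ℝ => exp (σ * log t)) (h' := fun t : ℝ => σ * exp ((σ - 1) * log t))
      ((eventually_gt_nhds hx).mono fun t ht => hasDerivAt_cexp_mul_log_s12 σ ht)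
      ((hasDerivAt_cexp_mul_log_s12 (σ - 1) hx).const_mul σ)
  simp only [Xr_eq_fieldDeriv, Xb_eq_fieldDeriv]
  change casimirSum (fun A => fieldDeriv A (fieldDeriv A _) x) = _
  have hpow₁ := cexp_sub_natCast_mul_log_mul_pow σ hx 1
  have hpow₂ := cexp_sub_natCast_mul_log_mul_pow σ hx 2
  rw [Nat.cast_one, pow_one] at hpow₁
  rw [show σ - ((2 : ℕ) : ℂ) = σ - 1 - 1 by push_cast; ring] at hpow₂
  simp only [hsecond]
  rw [casimirSum_ofReal_mul_add (fun A => mdot (A (A x)) ξ) (fun A => mdot (A x) ξ ^ 2),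
    casimirSum_mdot_apply_apply, casimirSum_mdot_apply_sq, hnull]
  push_cast
  linear_combination (-n * σ) * hpow₁ + (-σ * (σ - 1)) * hpow₂

/-- The de Sitter plane wave `ψ(x) = (x·ξ)^σ`, `ξ` a null covector, satisfies
`Σ_{i<j} X_{ij}²ψ − Σᵢ X_{i0}²ψ = −σ(σ+n−1)·ψ` on `{x·ξ > 0}`:  it is an
eigenfunction of (minus) the Casimir operator of the Lorentz algebra, so that
`□_{dS}ψ = μ²ψ` with `μ²R² = −σ(n−1+σ)`. -/
theorem plane_wave_casimir (n : ℕ) (hn : 2 ≤ n) (σ : ℂ)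
    (ξ : Fin (n + 1) → ℝ) (hnull : mdot ξ ξ = 0) :
    ∀ x : Fin (n + 1) → ℝ, 0 < mdot x ξ →
      (∑ i : Fin n, ∑ j : Fin n, if i < j then
          Xr i j (Xr i j (fun z => Complex.exp (σ * Complex.log ((mdot z ξ : ℝ) : ℂ)))) x
        else 0) -
        ∑ i : Fin n,
          Xb i (Xb i (fun z => Complex.exp (σ * Complex.log ((mdot z ξ : ℝ) : ℂ)))) x =
      -σ * (σ + (n : ℂ) - 1) * Complex.exp (σ * Complex.log ((mdot x ξ : ℝ) : ℂ)) :=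
  plane_wave_casimir_general n σ ξ hnull
end

section
/- Let n ≥ 2 be an integer and R > 0. For every x ∈ ℝ^{n+1} with −x₀² + Σ_{k=1}^n xₖ² = R² and x_n ≠ x₀, there exist ε ∈ {+1,−1}, τ ∈ ℝ and y ∈ ℝ^{n−1} such that x = ε·x(τ,y;R). That is, the horospheric charts cover the de Sitter hyperboloid except for the set {x : x_n = x₀} (a set of measure zero). -/
/-- The horospheric charts cover the de Sitter hyperboloid except for
the (measure-zero) set `{x : x_n = x₀}`: every `x` on the hyperboloid with
`x_n ≠ x₀` equals `ε·x(τ,y;R)` for some sign `ε` and some `(τ,y)`. -/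
theorem horoPt_covers (n : ℕ) (hn : 2 ≤ n) (R : ℝ) (hR : 0 < R)
    (x : Fin (n + 1) → ℝ)
    (hhyp : -(x 0) ^ 2 + ∑ k : Fin n, (x k.succ) ^ 2 = R ^ 2)
    (hne : x ⟨n, Nat.lt_succ_self n⟩ ≠ x 0) :
    ∃ ε : ℝ, (ε = 1 ∨ ε = -1) ∧ ∃ τ : ℝ, ∃ y : Fin (n - 1) → ℝ,
      ∀ k : Fin (n + 1), x k = ε * horoPt n R τ y k := by
  obtain ⟨m, rfl⟩ : ∃ m, n = m + 2 := ⟨n - 2, by omega⟩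
  have hR' : R ≠ 0 := ne_of_gt hR
  set Xn : ℝ := x ⟨m + 2, Nat.lt_succ_self _⟩ with hXndef
  set a : ℝ := Xn - x 0 with hadef
  have ha : a ≠ 0 := sub_ne_zero.mpr hne
  obtain ⟨u, ε, hu, hεor, hεa⟩ : ∃ u ε : ℝ, 0 < u ∧ (ε = 1 ∨ ε = -1) ∧ a = ε * u := by
    rcases ha.lt_or_gt with h | h
    · exact ⟨-a, -1, by linarith, Or.inr rfl, by ring⟩
    · exact ⟨a, 1, h, Or.inl rfl, by ring⟩
  have hu' : u ≠ 0 := ne_of_gt hu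
  have hε2 : ε * ε = 1 := by rcases hεor with h | h <;> rw [h] <;> ring
  obtain ⟨τ, hexp, hexp'⟩ :
      ∃ τ : ℝ, Real.exp (-τ / R) = u / R ∧ Real.exp (τ / R) = R / u := by
    refine ⟨-(R * Real.log (u / R)), ?_, ?_⟩
    · rw [neg_neg, mul_comm R, mul_div_assoc, div_self hR', mul_one,
        Real.exp_log (div_pos hu hR)]
    · rw [mul_comm R, neg_div, mul_div_assoc, div_self hR', mul_one,
        Real.exp_neg, Real.exp_log (div_pos hu hR), inv_div]
  -- the transverse coordinates
  obtain ⟨y, hy⟩ : ∃ y : Fin (m + 2 - 1) → ℝ,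
      ∀ i : Fin (m + 2 - 1), y i = -(ε * x ⟨(i : ℕ) + 1, by have := i.isLt; omega⟩) * (R / u) :=
    ⟨fun i => -(ε * x ⟨(i : ℕ) + 1, by have := i.isLt; omega⟩) * (R / u), fun i => rfl⟩
  set T : ℝ := ∑ i : Fin (m + 1), (x ⟨(i : ℕ) + 1, by omega⟩) ^ 2 with hTdef
  have hS : ∑ i : Fin (m + 2 - 1), (y i) ^ 2 = T * (R / u) ^ 2 := by
    rw [hTdef, Finset.sum_mul]
    refine Finset.sum_congr rfl fun i _ => ?_
    rw [hy]
    linear_combination (x ⟨(i : ℕ) + 1, by have := i.isLt; omega⟩) ^ 2 * (R / u) ^ 2 * hε2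
  have hsum : T + Xn ^ 2 = ∑ k : Fin (m + 2), (x k.succ) ^ 2 := by
    rw [Fin.sum_univ_castSucc]
    rfl
  have hhyp' : -(x 0) ^ 2 + (T + Xn ^ 2) = R ^ 2 := by rw [hsum]; exact hhyp
  have key0 : 2 * u * x 0 = ε * (R ^ 2 - u ^ 2 - T) := by
    have key : x 0 * (2 * a) = R ^ 2 - a ^ 2 - T := by
      rw [hadef]; linear_combination hhyp'
    rcases hεor with rfl | rfl <;> rw [hεa] at key <;>
      first
        | linear_combination key
        | linear_combination -key
  have keyn : 2 * u * Xn = ε * (R ^ 2 + u ^ 2 - T) := by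
    have key : Xn * (2 * a) = R ^ 2 + a ^ 2 - T := by
      rw [hadef]; linear_combination hhyp'
    rcases hεor with rfl | rfl <;> rw [hεa] at key <;>
      first
        | linear_combination key
        | linear_combination -key
  refine ⟨ε, hεor, τ, y, fun k => ?_⟩
  unfold horoPt
  split_ifs with h0 hk
  · -- k = 0
    have hk0 : k = 0 := Fin.ext h0
    subst hk0
    rw [Real.sinh_eq, hS, hexp', ← neg_div, hexp]
    have expand : R * ((R / u - u / R) / 2) - T * (R / u) ^ 2 / (2 * R) * (u / R)
        = (R ^ 2 - u ^ 2 - T) / (2 * u) := by field_simp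
    rw [expand, ← mul_div_assoc, eq_div_iff (by positivity : (2 : ℝ) * u ≠ 0)]
    linear_combination key0
  · -- k = n
    have hkn : k = ⟨m + 2, Nat.lt_succ_self _⟩ := Fin.ext hk
    subst hkn
    rw [Real.cosh_eq, hS, hexp', ← neg_div, hexp, ← hXndef]
    have expand : R * ((R / u + u / R) / 2) - T * (R / u) ^ 2 / (2 * R) * (u / R)
        = (R ^ 2 + u ^ 2 - T) / (2 * u) := by field_simp
    rw [expand, ← mul_div_assoc, eq_div_iff (by positivity : (2 : ℝ) * u ≠ 0)]
    linear_combination keyn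
  · -- middle
    have hk1 : 1 ≤ (k : ℕ) := Nat.one_le_iff_ne_zero.mpr h0
    have hxk : x ⟨(k : ℕ) - 1 + 1, by have := k.isLt; omega⟩ = x k := by
      congr 1
      exact Fin.ext (show (k : ℕ) - 1 + 1 = (k : ℕ) by omega)
    rw [hy, hxk, hexp]
    field_simp
    first
      | linear_combination (x k) * hε2
      | linear_combination (-(x k)) * hε2
end
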